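/- Let g, P > 0, let n ≥ 1 be a natural number, and let x ∈ ℝⁿ satisfy Σ_{i=1}^{n} x_i² = n·P (a power-shell codeword). Let Z = (Z₁,…,Zₙ) be i.i.d. standard Gaussian random variables and set Y_i := √g·x_i + Z_i. Then Var[ Σ_{i=1}^{n} ln( φ₁(Y_i − √g·x_i) / φ_{√(1+gP)}(Y_i) ) ] = n·( g·P·(g·P + 2) ) / ( 2·(1 + g·P)² ), i.e., it equals n·V(gP) where V is the shell dispersion, independently of the particular shell codeword x. -/

import Mathlib

open MeasureTheory ProbabilityTheory

/-- Density of the centered Gaussian with standard deviation `σ`. -/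
noncomputable def gaussDensity (σ y : ℝ) : ℝ :=
  (1 / (σ * Real.sqrt (2 * Real.pi))) * Real.exp (-(y ^ 2) / (2 * σ ^ 2))

/-!
Each summand of the information density is a quadratic polynomial `aᵢ + bᵢ Zᵢ + c Zᵢ²` in the
noise, with `bᵢ = √g xᵢ / (1 + gP)` and `c = -gP / (2(1 + gP))`. For a standard Gaussian `Z`
the odd moments vanish and `𝔼 Z⁴ = 3`, so `Var(a + bZ + cZ²) = b² + 2c²`. The coordinates are
independent, so the variances add, and the shell constraint `Σ xᵢ² = nP` turns `Σ bᵢ²` into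
`n gP / (1 + gP)²`, whatever the codeword.
-/

open Real
open scoped NNReal Nat

lemma integral_even_pow_mul_exp_neg_sq_div_two (k : ℕ) :
    ∫ x : ℝ, x ^ (2 * k) * exp (-x ^ 2 / 2) = (2 * k - 1 : ℕ)‼ * √(2 * π) := by
  have habs (x : ℝ) : x ^ (2 * k) * exp (-x ^ 2 / 2)
      = |x| ^ ((2 * k : ℕ) : ℝ) * exp (-(1 / 2) * |x| ^ (2 : ℝ)) := by
    rw [rpow_natCast, rpow_two, pow_mul, pow_mul, sq_abs]
    ring_nf
  simp_rw [habs]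
  rw [integral_comp_abs (f := fun x ↦ x ^ ((2 * k : ℕ) : ℝ) * exp (-(1 / 2) * x ^ (2 : ℝ))),
    integral_rpow_mul_exp_neg_mul_rpow two_pos (by linarith [(2 * k).cast_nonneg (α := ℝ)])
      one_half_pos]
  have hk : ((2 * k : ℕ) + 1 : ℝ) / 2 = k + 1 / 2 := by push_cast; ring
  rw [neg_div, hk, Gamma_nat_add_half, one_div, inv_rpow zero_le_two, ← rpow_neg zero_le_two,
    neg_neg, rpow_add two_pos, rpow_natCast, ← one_div, ← sqrt_eq_rpow, sqrt_mul zero_le_two]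
  field_simp

section GaussianMoments

variable (μ : ℝ) (v : ℝ≥0)

lemma integrable_pow_gaussianReal (n : ℕ) : Integrable (fun x ↦ x ^ n) (gaussianReal μ v) :=
  integrable_pow_of_mem_interior_integrableExpSet
    (by simp [integrableExpSet_fun_id_gaussianReal]) n

lemma memLp_two_pow_gaussianReal (n : ℕ) : MemLp (fun x ↦ x ^ n) 2 (gaussianReal μ v) :=
  (memLp_two_iff_integrable_sq (by fun_prop)).2 <| by
    simpa only [← pow_mul] using integrable_pow_gaussianReal μ v (n * 2)

lemma memLp_two_quadratic_gaussianReal (a b c : ℝ) :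
    MemLp (fun x ↦ a + b * x + c * x ^ 2) 2 (gaussianReal μ v) :=
  ((memLp_const a).add (by simpa using (memLp_two_pow_gaussianReal μ v 1).const_mul b)).add
    ((memLp_two_pow_gaussianReal μ v 2).const_mul c)

lemma integral_odd_pow_gaussianReal {n : ℕ} (hn : Odd n) :
    ∫ x, x ^ n ∂gaussianReal 0 v = 0 := by
  have h : ∫ x, x ^ n ∂gaussianReal 0 v = ∫ x, (-x) ^ n ∂gaussianReal 0 v := by
    conv_lhs => rw [← neg_zero, ← gaussianReal_map_neg]
    rw [integral_map (by fun_prop) (by fun_prop)]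
  simp only [hn.neg_pow, integral_neg] at h
  linarith

lemma integral_even_pow_gaussianReal_zero_one (k : ℕ) :
    ∫ x, x ^ (2 * k) ∂gaussianReal 0 1 = (2 * k - 1 : ℕ)‼ := by
  rw [integral_gaussianReal_eq_integral_smul one_ne_zero]
  simp only [gaussianPDFReal, NNReal.coe_one, mul_one, sub_zero, smul_eq_mul, mul_assoc,
    integral_const_mul, mul_comm (exp _), integral_even_pow_mul_exp_neg_sq_div_two]
  field_simp

lemma gaussianReal_zero_eq_map_sqrt_mul :
    gaussianReal 0 v = (gaussianReal 0 1).map (√(v : ℝ) * ·) := by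
  rw [gaussianReal_map_const_mul, mul_zero, mul_one]
  congr
  ext
  simp

lemma integral_even_pow_gaussianReal (k : ℕ) :
    ∫ x, x ^ (2 * k) ∂gaussianReal 0 v = v ^ k * (2 * k - 1 : ℕ)‼ := by
  rw [gaussianReal_zero_eq_map_sqrt_mul, integral_map (by fun_prop) (by fun_prop)]
  simp only [mul_pow, integral_const_mul, integral_even_pow_gaussianReal_zero_one]
  rw [pow_mul, sq_sqrt v.coe_nonneg]

lemma variance_sq_gaussianReal : Var[fun x ↦ x ^ 2; gaussianReal 0 v] = 2 * v ^ 2 := by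
  have h4 := integral_even_pow_gaussianReal v 2
  have h2 := integral_even_pow_gaussianReal v 1
  rw [variance_eq_sub (memLp_two_pow_gaussianReal 0 v 2)]
  simp only [Pi.pow_apply, ← pow_mul]
  norm_num at h4 h2 ⊢
  rw [h4, h2]
  ring

lemma covariance_id_sq_gaussianReal :
    cov[fun x ↦ x, fun x ↦ x ^ 2; gaussianReal 0 v] = 0 := by
  rw [covariance_eq_sub (by simpa using memLp_two_pow_gaussianReal 0 v 1)
    (memLp_two_pow_gaussianReal 0 v 2)]
  simp only [Pi.mul_apply, ← pow_succ', integral_id_gaussianReal, zero_mul, sub_zero]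
  exact integral_odd_pow_gaussianReal v (by decide)

lemma variance_quadratic_gaussianReal (a b c : ℝ) :
    Var[fun x ↦ a + b * x + c * x ^ 2; gaussianReal 0 v] = b ^ 2 * v + 2 * c ^ 2 * v ^ 2 := by
  have hX : MemLp (fun x ↦ b * x) 2 (gaussianReal 0 v) := by
    simpa using (memLp_two_pow_gaussianReal 0 v 1).const_mul b
  have hY : MemLp (fun x ↦ c * x ^ 2) 2 (gaussianReal 0 v) :=
    (memLp_two_pow_gaussianReal 0 v 2).const_mul c
  calc Var[fun x ↦ a + b * x + c * x ^ 2; gaussianReal 0 v]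
      = Var[fun x ↦ (b * x + c * x ^ 2) + a; gaussianReal 0 v] := by congr 1; ext; ring
    _ = Var[fun x ↦ b * x; gaussianReal 0 v]
          + 2 * cov[fun x ↦ b * x, fun x ↦ c * x ^ 2; gaussianReal 0 v]
          + Var[fun x ↦ c * x ^ 2; gaussianReal 0 v] := by
      rw [variance_add_const (X := fun x ↦ b * x + c * x ^ 2) (by fun_prop),
        variance_fun_add hX hY]
    _ = b ^ 2 * v + 2 * c ^ 2 * v ^ 2 := by
      rw [covariance_const_mul_left, covariance_const_mul_right, covariance_id_sq_gaussianReal,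
        variance_const_mul, variance_const_mul, variance_sq_gaussianReal,
        variance_fun_id_gaussianReal]
      ring

end GaussianMoments

lemma log_gaussDensity_div_gaussDensity {σ τ : ℝ} (hσ : 0 < σ) (hτ : 0 < τ) (y z : ℝ) :
    log (gaussDensity σ y / gaussDensity τ z)
      = log (τ / σ) + z ^ 2 / (2 * τ ^ 2) - y ^ 2 / (2 * σ ^ 2) := by
  have h : gaussDensity σ y / gaussDensity τ z
      = τ / σ * exp (z ^ 2 / (2 * τ ^ 2) - y ^ 2 / (2 * σ ^ 2)) := by
    simp only [gaussDensity, exp_sub, neg_div, exp_neg]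
    field_simp
  rw [h, log_mul (by positivity) (exp_pos _).ne', log_exp]
  ring

theorem variance_shell_info_density_general (g P : ℝ) (hg : 0 < g) (hP : 0 < P)
    (n : ℕ) (x : Fin n → ℝ) (hx : ∑ i, x i ^ 2 = n * P) :
    variance
      (fun z : Fin n → ℝ =>
        ∑ i : Fin n,
          Real.log
            (gaussDensity 1 ((Real.sqrt g * x i + z i) - Real.sqrt g * x i) /
              gaussDensity (Real.sqrt (1 + g * P)) (Real.sqrt g * x i + z i)))
      (Measure.pi fun _ : Fin n => gaussianReal 0 1) =
      (n : ℝ) * (g * P * (g * P + 2)) / (2 * (1 + g * P) ^ 2) := by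
  set s := 1 + g * P
  have hs : 0 < s := by positivity
  have hquad (i : Fin n) (t : ℝ) :
      log (gaussDensity 1 ((√g * x i + t) - √g * x i) / gaussDensity √s (√g * x i + t))
        = (log √s + g * x i ^ 2 / (2 * s)) + √g * x i / s * t + (1 / (2 * s) - 1 / 2) * t ^ 2 := by
    rw [log_gaussDensity_div_gaussDensity one_pos (sqrt_pos.2 hs), div_one, add_sub_cancel_left,
      sq_sqrt hs.le]
    field_simp
    rw [add_sq, mul_pow, sq_sqrt hg.le]
    ring
  simp_rw [hquad, ← Finset.sum_fn]
  rw [variance_sum_pi fun i ↦ memLp_two_quadratic_gaussianReal 0 1 _ _ _]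
  simp only [variance_quadratic_gaussianReal, NNReal.coe_one, mul_one, one_pow, div_pow, mul_pow,
    sq_sqrt hg.le, Finset.sum_add_distrib, ← Finset.sum_div, ← Finset.mul_sum, hx,
    Finset.sum_const, Finset.card_univ, Fintype.card_fin, nsmul_eq_mul]
  field_simp
  ring

/-- For a power-shell codeword `x` (with `Σ xᵢ² = nP`), the variance of the
modified information density of the memoryless Gaussian channel equals
`n·V(gP)`, where `V(x) := x(x+2)/(2(1+x)²)` is the shell dispersion,
independently of the particular codeword. -/
theorem variance_shell_info_density (g P : ℝ) (hg : 0 < g) (hP : 0 < P)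
    (n : ℕ) (hn : 1 ≤ n) (x : Fin n → ℝ) (hx : ∑ i, x i ^ 2 = n * P) :
    variance
      (fun z : Fin n → ℝ =>
        ∑ i : Fin n,
          Real.log
            (gaussDensity 1 ((Real.sqrt g * x i + z i) - Real.sqrt g * x i) /
              gaussDensity (Real.sqrt (1 + g * P)) (Real.sqrt g * x i + z i)))
      (Measure.pi fun _ : Fin n => gaussianReal 0 1) =
      (n : ℝ) * (g * P * (g * P + 2)) / (2 * (1 + g * P) ^ 2) :=
  variance_shell_info_density_general g P hg hP n x hx
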